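/- Bound on the probability that the empirical Gram matrix is singular: under the same orthonormality assumption P(ħħ') = I_m, the probability that P_n(ħħ') is not invertible is at most n^{-1} P(q²) with q = ħ'ħ. -/

import Mathlib

open MeasureTheory Matrix

/-!
If the squared Frobenius distance `Z` of the empirical Gram matrix to `1` is below `1`, the matrix
is a unit (Neumann series), so by Markov's inequality the probability of singularity is at most
`E Z`. Entry `(j, k)` of the empirical Gram matrix is the empirical mean of `ħ_j ħ_k`, whose mean
is `δ_jk`; its expected squared deviation is its variance, at most `n⁻¹ P((ħ_j ħ_k)²)`, and summing
over `j, k` gives `n⁻¹ P(q²)`.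
-/

open Finset ProbabilityTheory
open scoped ENNReal

open scoped Matrix.Norms.Frobenius in
theorem Matrix.isUnit_det_of_sum_norm_sub_one_sq_lt_one {ι 𝕜 : Type*} [Fintype ι] [DecidableEq ι]
    [RCLike 𝕜] {A : Matrix ι ι 𝕜} (h : ∑ i, ∑ j, ‖(A - 1) i j‖ ^ 2 < 1) : IsUnit A.det := by
  have hA : A ∈ Metric.ball (1 : Matrix ι ι 𝕜) 1 := by
    rw [mem_ball_iff_norm, frobenius_norm_def]
    exact Real.rpow_lt_one (by positivity) (by simpa only [Real.rpow_two] using h) (by norm_num)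
  by_contra hdet
  exact nonunits.subset_compl_ball (mt (isUnit_iff_isUnit_det A).1 hdet) hA

instance ENNReal.HolderTriple.instFourFourTwo : ENNReal.HolderTriple 4 4 2 := ⟨by
  rw [show (4 : ℝ≥0∞) = 2 * 2 by norm_num, ENNReal.mul_inv (by simp) (by simp), ← add_mul,
    ENNReal.inv_two_add_inv_two, one_mul]⟩

theorem sq_sum_sq_eq_sum_sum_sq_mul {ι R : Type*} [CommSemiring R] (s : Finset ι) (a : ι → R) :
    (∑ j ∈ s, a j ^ 2) ^ 2 = ∑ j ∈ s, ∑ k ∈ s, (a j * a k) ^ 2 := by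
  simp_rw [sq (∑ j ∈ s, _), sum_mul_sum, mul_pow]

section EmpiricalMean

variable {S Ω : Type*} [MeasurableSpace S] [MeasurableSpace Ω] {P : Measure S} {Q : Measure Ω}
  {n m : ℕ} {X : Fin n → Ω → S}

noncomputable def empiricalMean (X : Fin n → Ω → S) (f : S → ℝ) (ω : Ω) : ℝ :=
  (n : ℝ)⁻¹ * ∑ i, f (X i ω)

variable [IsProbabilityMeasure P] {f : S → ℝ}

-- `Measure.map` sends a map that is not a.e.-measurable to `0`.
theorem aemeasurable_of_map_eq {Y : Ω → S} (hY : Q.map Y = P) : AEMeasurable Y Q :=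
  .of_map_ne_zero (hY ▸ IsProbabilityMeasure.ne_zero P)

theorem memLp_empiricalMean {p : ℝ≥0∞} (hf : MemLp f p P) (hlaw : ∀ i, Q.map (X i) = P) :
    MemLp (empiricalMean X f) p Q := by
  have hfX (i : Fin n) : MemLp (f ∘ X i) p Q :=
    (hlaw i ▸ hf).comp_of_map (aemeasurable_of_map_eq (hlaw i))
  exact (memLp_finsetSum univ fun i _ => hfX i).const_mul _

theorem integral_empiricalMean (hn : n ≠ 0) (hf : Integrable f P) (hlaw : ∀ i, Q.map (X i) = P) :
    ∫ ω, empiricalMean X f ω ∂Q = ∫ x, f x ∂P := by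
  have hfX (i : Fin n) : ∫ ω, f (X i ω) ∂Q = ∫ x, f x ∂P := by
    rw [← integral_map (aemeasurable_of_map_eq (hlaw i)) (hlaw i ▸ hf.1), hlaw i]
  simp_rw [empiricalMean, integral_const_mul]
  rw [integral_finsetSum _ fun i _ => (hlaw i ▸ hf).comp_aemeasurable
    (aemeasurable_of_map_eq (hlaw i))]
  simp [hfX, hn]

theorem variance_empiricalMean (hf : MemLp f 2 P) (hlaw : ∀ i, Q.map (X i) = P)
    (hindep : iIndepFun X Q) : Var[empiricalMean X f; Q] = (n : ℝ)⁻¹ * Var[f; P] := by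
  have hX i := aemeasurable_of_map_eq (hlaw i)
  have hfX : iIndepFun (fun i => f ∘ X i) Q :=
    hindep.comp₀ (fun _ => f) hX fun i => hlaw i ▸ hf.1.aemeasurable
  have hvar (i : Fin n) : Var[f ∘ X i; Q] = Var[f; P] := by
    rw [← variance_map (hlaw i ▸ hf.1.aemeasurable) (hX i), hlaw i]
  have hsum : Var[∑ i, f ∘ X i; Q] = n * Var[f; P] := by
    rw [IndepFun.variance_sum (fun i _ => (hlaw i ▸ hf).comp_of_map (hX i))
      fun i _ j _ hij => hfX.indepFun hij]
    simp [hvar]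
  have hmean : empiricalMean X f = fun ω => (n : ℝ)⁻¹ * (∑ i, f ∘ X i) ω := by
    ext ω; simp [empiricalMean]
  rw [hmean, variance_const_mul, hsum]
  rcases eq_or_ne n 0 with rfl | hn
  · simp
  · field_simp

theorem integral_sq_empiricalMean_sub_le (hn : n ≠ 0) (hf : MemLp f 2 P)
    (hlaw : ∀ i, Q.map (X i) = P) (hindep : iIndepFun X Q) :
    ∫ ω, (empiricalMean X f ω - ∫ x, f x ∂P) ^ 2 ∂Q ≤ (n : ℝ)⁻¹ * ∫ x, f x ^ 2 ∂P := by
  rw [← integral_empiricalMean hn (hf.integrable one_le_two) hlaw,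
    ← variance_eq_integral (memLp_empiricalMean hf hlaw).aemeasurable,
    variance_empiricalMean hf hlaw hindep]
  gcongr
  exact variance_le_expectation_sq hf.1

noncomputable def empiricalGram (X : Fin n → Ω → S) (h : Fin m → S → ℝ) (ω : Ω) :
    Matrix (Fin m) (Fin m) ℝ :=
  of fun j k => empiricalMean X (fun x => h j x * h k x) ω

variable [IsProbabilityMeasure Q] {h : Fin m → S → ℝ}

theorem integrable_sum_sq_empiricalGram_sub (hL4 : ∀ j, MemLp (h j) 4 P)
    (hlaw : ∀ i, Q.map (X i) = P) (C : Matrix (Fin m) (Fin m) ℝ) :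
    Integrable (fun ω => ∑ j, ∑ k, (empiricalGram X h ω j k - C j k) ^ 2) Q :=
  integrable_finsetSum _ fun j _ => integrable_finsetSum _ fun k _ =>
    ((memLp_empiricalMean ((hL4 k).mul' (hL4 j)) hlaw).sub (memLp_const _)).integrable_sq

theorem integral_sum_sq_empiricalGram_sub_le (hn : n ≠ 0) (hL4 : ∀ j, MemLp (h j) 4 P)
    (hlaw : ∀ i, Q.map (X i) = P) (hindep : iIndepFun X Q) :
    ∫ ω, ∑ j, ∑ k, (empiricalGram X h ω j k - ∫ x, h j x * h k x ∂P) ^ 2 ∂Q ≤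
      (n : ℝ)⁻¹ * ∫ x, (∑ j, h j x ^ 2) ^ 2 ∂P := by
  have hF (j k : Fin m) : MemLp (fun x => h j x * h k x) 2 P := (hL4 k).mul' (hL4 j)
  have hG (j k : Fin m) : Integrable
      (fun ω => (empiricalGram X h ω j k - ∫ x, h j x * h k x ∂P) ^ 2) Q :=
    ((memLp_empiricalMean (hF j k) hlaw).sub (memLp_const _)).integrable_sq
  calc ∫ ω, ∑ j, ∑ k, (empiricalGram X h ω j k - ∫ x, h j x * h k x ∂P) ^ 2 ∂Q
      = ∑ j, ∑ k, ∫ ω, (empiricalGram X h ω j k - ∫ x, h j x * h k x ∂P) ^ 2 ∂Q := by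
        rw [integral_finsetSum _ fun j _ => integrable_finsetSum _ fun k _ => hG j k]
        simp_rw [integral_finsetSum _ fun k _ => hG _ k]
    _ ≤ ∑ j, ∑ k, (n : ℝ)⁻¹ * ∫ x, (h j x * h k x) ^ 2 ∂P := by
        gcongr with j _ k _
        exact integral_sq_empiricalMean_sub_le hn (hF j k) hlaw hindep
    _ = (n : ℝ)⁻¹ * ∫ x, (∑ j, h j x ^ 2) ^ 2 ∂P := by
        simp_rw [sq_sum_sq_eq_sum_sum_sq_mul, ← mul_sum]
        rw [integral_finsetSum _ fun j _ => integrable_finsetSum _ fun k _ => (hF j k).integrable_sq]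
        simp_rw [integral_finsetSum _ fun k _ => (hF _ k).integrable_sq]

end EmpiricalMean

theorem stmt12_general {S Ω : Type*} [MeasurableSpace S] [MeasurableSpace Ω]
    (P : Measure S) [IsProbabilityMeasure P] (Q : Measure Ω) [IsProbabilityMeasure Q]
    {n m : ℕ} (hn : 0 < n) (hb : Fin m → S → ℝ) (hL4 : ∀ j, MemLp (hb j) 4 P)
    (horth : ∀ j k, ∫ x, hb j x * hb k x ∂P = if j = k then 1 else 0)
    (X : Fin n → Ω → S) (hlaw : ∀ i, Measure.map (X i) Q = P)
    (hindep : ProbabilityTheory.iIndepFun X Q) :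
    (Q {ω | ¬ IsUnit (Matrix.of fun j k : Fin m =>
        (n : ℝ)⁻¹ * ∑ i, hb j (X i ω) * hb k (X i ω)).det}).toReal ≤
      (n : ℝ)⁻¹ * ∫ x, (∑ j, hb j x ^ 2) ^ 2 ∂P := by
  set Z : Ω → ℝ := fun ω => ∑ j, ∑ k, (empiricalGram X hb ω j k - (1 : Matrix _ _ ℝ) j k) ^ 2
  have hZ : Z = fun ω => ∑ j, ∑ k, (empiricalGram X hb ω j k - ∫ x, hb j x * hb k x ∂P) ^ 2 := by
    simp only [Z, horth, one_apply]
  have hsingular : {ω | ¬IsUnit (empiricalGram X hb ω).det} ⊆ {ω | 1 ≤ Z ω} := fun ω hω =>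
    not_lt.1 fun hZ1 => hω (isUnit_det_of_sum_norm_sub_one_sq_lt_one (by simpa [sq_abs] using hZ1))
  calc Q.real {ω | ¬IsUnit (empiricalGram X hb ω).det}
      ≤ Q.real {ω | 1 ≤ Z ω} := measureReal_mono hsingular
    _ ≤ ∫ ω, Z ω ∂Q := by
      simpa using mul_meas_ge_le_integral_of_nonneg (ae_of_all _ fun ω => by positivity)
        (integrable_sum_sq_empiricalGram_sub hL4 hlaw 1) 1
    _ ≤ (n : ℝ)⁻¹ * ∫ x, (∑ j, hb j x ^ 2) ^ 2 ∂P :=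
      hZ ▸ integral_sum_sq_empiricalGram_sub_le hn.ne' hL4 hlaw hindep

/-- Bound on the probability that the empirical Gram matrix of orthonormal control
variates is singular: `P(P_n(ħħ') not invertible) ≤ n⁻¹ P(q²)` with `q = ħ'ħ`. -/
theorem stmt12 {S Ω : Type*} [MeasurableSpace S] [MeasurableSpace Ω]
    (P : Measure S) [IsProbabilityMeasure P] (Q : Measure Ω) [IsProbabilityMeasure Q]
    {n m : ℕ} (hn : 0 < n) (hb : Fin m → S → ℝ)
    (hmeas : ∀ j, Measurable (hb j)) (hL4 : ∀ j, MemLp (hb j) 4 P)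
    (hmean : ∀ j, ∫ x, hb j x ∂P = 0)
    (horth : ∀ j k, ∫ x, hb j x * hb k x ∂P = if j = k then 1 else 0)
    (X : Fin n → Ω → S) (hXmeas : ∀ i, Measurable (X i))
    (hlaw : ∀ i, Measure.map (X i) Q = P)
    (hindep : ProbabilityTheory.iIndepFun X Q) :
    (Q {ω | ¬ IsUnit (Matrix.of fun j k : Fin m =>
        (n : ℝ)⁻¹ * ∑ i, hb j (X i ω) * hb k (X i ω)).det}).toReal ≤
      (n : ℝ)⁻¹ * ∫ x, (∑ j, hb j x ^ 2) ^ 2 ∂P :=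
  stmt12_general P Q hn hb hL4 horth X hlaw hindep
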